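/- Let s > 0 and b ∈ (0,∞). The graph of the set-valued map H_{s,b} is closed: if (uₙ, qₙ) → (u, q) in ℝ² with uₙ ∈ H_{s,b}(qₙ) for all n, then u ∈ H_{s,b}(q). -/
import Mathlib


open Filter Topology

/-- The "L⁰ norm" of a real number: 0 if `u = 0`, else 1. -/
noncomputable def nrm0 (u : ℝ) : ℝ := if u = 0 then 0 else 1

/-- `H_{s,b}(q)`: the set of global minimizers of `v ↦ -q·v + v²/2 + s·|v|₀`
over `{v : |v| ≤ b}`. -/
def Hsb (s b q : ℝ) : Set ℝ :=
  {u | |u| ≤ b ∧ ∀ v : ℝ, |v| ≤ b →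
        -q * u + u ^ 2 / 2 + s * nrm0 u ≤ -q * v + v ^ 2 / 2 + s * nrm0 v}

lemma nrm0_nonneg (u : ℝ) : 0 ≤ nrm0 u := by
  unfold nrm0; split <;> norm_num

/-- The graph of `H_{s,b}` is closed: limits of convergent sequences in the graph
remain in the graph. -/
theorem Hsb_graph_closed (s b : ℝ) (hs : 0 < s) (hb : 0 < b)
    (un qn : ℕ → ℝ) (u q : ℝ)
    (hun : Tendsto un atTop (𝓝 u)) (hqn : Tendsto qn atTop (𝓝 q))
    (hmem : ∀ n, un n ∈ Hsb s b (qn n)) :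
    u ∈ Hsb s b q := by
  have habs : ∀ n, |un n| ≤ b := fun n => (hmem n).1
  constructor
  · exact le_of_tendsto hun.abs (Eventually.of_forall habs)
  intro v hv
  have hle : ∀ n, -qn n * un n + (un n) ^ 2 / 2 + s * nrm0 (un n) ≤
      -qn n * v + v ^ 2 / 2 + s * nrm0 v := fun n => (hmem n).2 v hv
  have hbnd : Tendsto (fun n => -qn n * v + v ^ 2 / 2 + s * nrm0 v) atTop
      (𝓝 (-q * v + v ^ 2 / 2 + s * nrm0 v)) := by
    exact (((hqn.neg).mul_const v).add_const _).add_const _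
  by_cases hu : u = 0
  · subst hu
    have h0 : -q * 0 + (0:ℝ) ^ 2 / 2 + s * nrm0 0 = 0 := by simp [nrm0]
    rw [h0]
    have hc : Tendsto (fun n => -qn n * un n + (un n) ^ 2 / 2) atTop (𝓝 0) := by
      have := ((hqn.neg).mul hun).add ((hun.pow 2).div_const 2)
      simpa using this
    refine le_of_tendsto_of_tendsto' hc hbnd (fun n => ?_)
    calc -qn n * un n + (un n) ^ 2 / 2
        ≤ -qn n * un n + (un n) ^ 2 / 2 + s * nrm0 (un n) := by
          nlinarith [nrm0_nonneg (un n), hs.le]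
      _ ≤ _ := hle n
  · have hev : ∀ᶠ n in atTop, un n ≠ 0 := hun (isOpen_ne.mem_nhds hu)
    have ha : Tendsto (fun n => -qn n * un n + (un n) ^ 2 / 2 + s * nrm0 (un n)) atTop
        (𝓝 (-q * u + u ^ 2 / 2 + s * nrm0 u)) := by
      have hcont : Tendsto (fun n => -qn n * un n + (un n) ^ 2 / 2 + s * 1) atTop
          (𝓝 (-q * u + u ^ 2 / 2 + s * 1)) := by
        exact (((hqn.neg).mul hun).add ((hun.pow 2).div_const 2)).add_const _
      rw [show nrm0 u = 1 from if_neg hu]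
      refine Tendsto.congr' ?_ hcont
      filter_upwards [hev] with n hn
      rw [show nrm0 (un n) = 1 from if_neg hn]
    exact le_of_tendsto_of_tendsto' ha hbnd hle
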